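/- arXiv:2202.04441 — 8 statements merged into one kernel-verified Lean document; each statement's English description precedes it below -/
import Mathlib

section
/- Let s ≥ 1 and let m be a positive odd integer. Then the 2s-th iterate of the Collatz map applied to 2^s · m − 1 equals 3^s · m − 1, and this number 3^s · m − 1 is even and positive (this is the s-evolution from the odd number 2^s · m − 1 to the even number 3^s · m − 1). -/
/-- The Collatz map: `f n = 3 n + 1` if `n` is odd, `n / 2` if `n` is even. -/
def collatz : ℕ → ℕ := fun n => if n % 2 = 1 then 3 * n + 1 else n / 2

lemma collatz_key : ∀ s m : ℕ, 0 < m → m % 2 = 1 →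
    collatz^[2 * s] (2 ^ s * m - 1) = 3 ^ s * m - 1 := by
  intro s
  induction s with
  | zero => intro m _ _; simp
  | succ s ih =>
    intro m hm hodd
    have h1 : 1 ≤ 2 ^ (s + 1) * m := Nat.one_le_iff_ne_zero.2 (by positivity)
    have hstep1 : collatz (2 ^ (s + 1) * m - 1) = 2 * (2 ^ s * (3 * m) - 1) := by
      unfold collatz
      have hmod : (2 ^ (s + 1) * m - 1) % 2 = 1 := by
        have : 2 ∣ 2 ^ (s + 1) * m := Dvd.dvd.mul_right (dvd_pow_self 2 (Nat.succ_ne_zero s)) m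
        omega
      rw [if_pos hmod]
      have h2 : 1 ≤ 2 ^ s * (3 * m) := Nat.one_le_iff_ne_zero.2 (by positivity)
      have : 2 ^ (s + 1) * m = 2 * (2 ^ s * m) := by ring
      rw [this] at h1 ⊢
      have : 2 ^ s * (3 * m) = 3 * (2 ^ s * m) := by ring
      rw [this]
      omega
    have hstep2 : collatz (2 * (2 ^ s * (3 * m) - 1)) = 2 ^ s * (3 * m) - 1 := by
      unfold collatz
      rw [if_neg (by omega)]
      omega
    have h2s : 2 * (s + 1) = 2 * s + 1 + 1 := by ring
    rw [h2s, Function.iterate_succ_apply, Function.iterate_succ_apply,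
      hstep1, hstep2, ih (3 * m) (by positivity) (by omega)]
    ring_nf
lemma pow3_odd (s m : ℕ) (hodd : m % 2 = 1) : (3 ^ s * m) % 2 = 1 := by
  have h3 : 3 ^ s % 2 = 1 := Nat.pow_mod 3 s 2 ▸ by simp
  rw [Nat.mul_mod, h3, hodd]

/-- The `s`-evolution: for `s ≥ 1` and `m` a positive odd integer, the `2s`-th
iterate of the Collatz map applied to the odd number `2 ^ s * m - 1` equals
`3 ^ s * m - 1`, which is even and positive. -/
theorem s_evolution (s m : ℕ) (hs : 1 ≤ s) (hm : 0 < m) (hmodd : ¬ 2 ∣ m) :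
    collatz^[2 * s] (2 ^ s * m - 1) = 3 ^ s * m - 1 ∧
    2 ∣ (3 ^ s * m - 1) ∧ 0 < 3 ^ s * m - 1 := by
  have hodd : m % 2 = 1 := Nat.odd_iff.mp (Nat.odd_iff.mpr (by omega))
  have hmodd' : m % 2 = 1 := by omega
  have hkey := collatz_key s m hm hmodd'
  have hpow : (3 ^ s * m) % 2 = 1 := pow3_odd s m hmodd'
  have h3 : 3 ≤ 3 ^ s := by
    calc 3 = 3 ^ 1 := by norm_num
    _ ≤ 3 ^ s := Nat.pow_le_pow_right (by norm_num) hs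
  have hge : 3 ≤ 3 ^ s * m := le_trans h3 (Nat.le_mul_of_pos_right _ hm)
  exact ⟨hkey, by omega, by omega⟩
end

section
/- For every positive odd integer n there exist unique positive integers s and q and unique positive odd integers m and ñ such that n = 2^s · m − 1, the 2s-th iterate of the Collatz map applied to n equals 3^s · m − 1 = 2^q · ñ, and the (2s+q)-th iterate of the Collatz map applied to n equals ñ. -/
lemma collatz_double (a : ℕ) : collatz (2 * a) = a := by
  unfold collatz
  have h : 2 * a % 2 = 0 := by omega
  simp [h]

lemma collatz_pow_two_mul (q t : ℕ) : collatz^[q] (2 ^ q * t) = t := by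
  induction q with
  | zero => simp
  | succ k ih =>
    rw [Function.iterate_succ_apply]
    have h : 2 ^ (k + 1) * t = 2 * (2 ^ k * t) := by ring
    rw [h, collatz_double, ih]

lemma collatz_odd_two (a : ℕ) (ha : 1 ≤ a) : collatz^[2] (2 * a - 1) = 3 * a - 1 := by
  have h1 : collatz (2 * a - 1) = 2 * (3 * a - 1) := by
    unfold collatz
    have hmod : (2 * a - 1) % 2 = 1 := by omega
    simp [hmod]
    omega
  show collatz (collatz _) = _
  rw [h1, collatz_double]

lemma collatz_two_step (s m : ℕ) (hm0 : 0 < m) :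
    collatz^[2] (2 ^ (s + 1) * m - 1) = 2 ^ s * (3 * m) - 1 := by
  have h : 2 ^ (s + 1) * m = 2 * (2 ^ s * m) := by ring
  have ha : 1 ≤ 2 ^ s * m := Nat.one_le_iff_ne_zero.mpr (by positivity)
  rw [h, collatz_odd_two _ ha]
  ring_nf

lemma collatz_main (s m : ℕ) (hm0 : 0 < m) :
    collatz^[2 * s] (2 ^ s * m - 1) = 3 ^ s * m - 1 := by
  induction s generalizing m with
  | zero => simp
  | succ k ih =>
    have h1 : 2 * (k + 1) = 2 * k + 2 := by ring
    rw [h1, Function.iterate_add_apply, collatz_two_step k m hm0]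
    have := ih (3 * m) (by omega)
    rw [this]
    ring_nf

lemma pow_two_mul_inj {s m s' m' : ℕ} (hm : ¬ 2 ∣ m) (hm' : ¬ 2 ∣ m')
    (h : 2 ^ s * m = 2 ^ s' * m') : s = s' ∧ m = m' := by
  induction s generalizing s' with
  | zero =>
    cases s' with
    | zero => simpa using h
    | succ k =>
      exfalso
      apply hm
      simp only [pow_zero, one_mul] at h
      exact ⟨2 ^ k * m', by rw [h]; ring⟩
  | succ k ih =>
    cases s' with
    | zero =>
      exfalso
      apply hm'
      simp only [pow_zero, one_mul] at h
      exact ⟨2 ^ k * m, by rw [← h]; ring⟩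
    | succ l =>
      have h' : 2 * (2 ^ k * m) = 2 * (2 ^ l * m') := by
        rw [← mul_assoc, ← mul_assoc, mul_comm 2 (2 ^ k), mul_comm 2 (2 ^ l),
          ← pow_succ, ← pow_succ]
        exact h
      have h2 : 2 ^ k * m = 2 ^ l * m' := Nat.eq_of_mul_eq_mul_left (by norm_num) h'
      obtain ⟨h3, h4⟩ := ih h2
      exact ⟨by omega, h4⟩

/-- For every positive odd integer `n` there exist unique positive integers `s`, `q`
and unique positive odd integers `m`, `t` such that `n = 2 ^ s * m - 1`, the `2s`-th
iterate of the Collatz map at `n` equals `3 ^ s * m - 1 = 2 ^ q * t`, and the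
`(2s + q)`-th iterate at `n` equals `t`. -/
theorem sq_evolution_exists_unique (n : ℕ) (hn : 0 < n) (hodd : ¬ 2 ∣ n) :
    ∃ s q m t : ℕ,
      (1 ≤ s ∧ 1 ≤ q ∧ 0 < m ∧ ¬ 2 ∣ m ∧ 0 < t ∧ ¬ 2 ∣ t ∧
        n = 2 ^ s * m - 1 ∧
        collatz^[2 * s] n = 3 ^ s * m - 1 ∧
        3 ^ s * m - 1 = 2 ^ q * t ∧
        collatz^[2 * s + q] n = t) ∧
      (∀ s' q' m' t' : ℕ,
        (1 ≤ s' ∧ 1 ≤ q' ∧ 0 < m' ∧ ¬ 2 ∣ m' ∧ 0 < t' ∧ ¬ 2 ∣ t' ∧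
          n = 2 ^ s' * m' - 1 ∧
          collatz^[2 * s'] n = 3 ^ s' * m' - 1 ∧
          3 ^ s' * m' - 1 = 2 ^ q' * t' ∧
          collatz^[2 * s' + q'] n = t') →
        s = s' ∧ q = q' ∧ m = m' ∧ t = t') := by
  obtain ⟨s, m, hm, hfac⟩ := Nat.exists_eq_pow_mul_and_not_dvd (n := n + 1) (by omega) 2 (by norm_num)
  have hm0 : 0 < m := by
    rcases Nat.eq_zero_or_pos m with h | h
    · exfalso; rw [h, mul_zero] at hfac; omega
    · exact h
  have hs1 : 1 ≤ s := by
    by_contra h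
    have h0 : s = 0 := by omega
    rw [h0] at hfac
    simp at hfac
    exact hodd ⟨(n + 1) / 2, by omega⟩
  have hn_eq : n = 2 ^ s * m - 1 := by omega
  have hiter : collatz^[2 * s] n = 3 ^ s * m - 1 := by
    rw [hn_eq]; exact collatz_main s m hm0
  have h3m : 3 ^ s * m ≥ 3 := by
    calc (3:ℕ) = 3 ^ 1 * 1 := by norm_num
    _ ≤ 3 ^ s * m := Nat.mul_le_mul (Nat.pow_le_pow_right (by norm_num) hs1) hm0
  obtain ⟨q, t, ht, hfac2⟩ := Nat.exists_eq_pow_mul_and_not_dvd (n := 3 ^ s * m - 1) (by omega) 2 (by norm_num)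
  have ht0 : 0 < t := by
    rcases Nat.eq_zero_or_pos t with h | h
    · exfalso; rw [h, mul_zero] at hfac2; omega
    · exact h
  have hodd3 : ¬ 2 ∣ 3 ^ s * m := by
    intro hd
    rcases (Nat.Prime.dvd_mul Nat.prime_two).mp hd with h | h
    · have := Nat.Prime.dvd_of_dvd_pow (p := 2) (n := s) Nat.prime_two h
      omega
    · exact hm h
  have hq1 : 1 ≤ q := by
    by_contra h
    have h0 : q = 0 := by omega
    rw [h0] at hfac2
    simp at hfac2
    apply hodd3
    exact ⟨(3 ^ s * m) / 2, by omega⟩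
  have hiter2 : collatz^[2 * s + q] n = t := by
    rw [add_comm, Function.iterate_add_apply, hiter, hfac2]
    exact collatz_pow_two_mul q t
  refine ⟨s, q, m, t, ⟨hs1, hq1, hm0, hm, ht0, ht, hn_eq, hiter, hfac2, hiter2⟩, ?_⟩
  rintro s' q' m' t' ⟨hs1', hq1', hm0', hm', ht0', ht', hn_eq', _, hfac2', _⟩
  have hge' : 1 ≤ 2 ^ s' * m' := Nat.one_le_iff_ne_zero.mpr (by positivity)
  have heq1 : 2 ^ s * m = 2 ^ s' * m' := by omega
  obtain ⟨hss, hmm⟩ := pow_two_mul_inj hm hm' heq1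
  rw [← hss, ← hmm] at hfac2'
  obtain ⟨hqq, htt⟩ := pow_two_mul_inj ht ht' (hfac2.symm.trans hfac2')
  exact ⟨hss, hqq, hmm, htt⟩
end

section
/- For any positive integers s_1, q_1, s_2 there exist positive odd integers M_1 and M_2 such that for every natural number t, the pair (m_1, m_2) = (M_1 + 2^{q_1+s_2+1} · t, M_2 + 2 · 3^{s_1} · t) consists of odd positive integers and satisfies 2^{q_1+s_2} · m_2 − 3^{s_1} · m_1 = 2^{q_1} − 1. -/
/-- For any positive integers `s1, q1, s2` there exist positive odd integers
`M1`, `M2` such that for every natural number `t` the pair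
`(m1, m2) = (M1 + 2 ^ (q1 + s2 + 1) * t, M2 + 2 * 3 ^ s1 * t)` consists of odd
positive integers and satisfies `2 ^ (q1 + s2) * m2 - 3 ^ s1 * m1 = 2 ^ q1 - 1`. -/
theorem dioph_odd_solutions_family (s1 q1 s2 : ℕ)
    (hs1 : 1 ≤ s1) (hq1 : 1 ≤ q1) (hs2 : 1 ≤ s2) :
    ∃ M1 M2 : ℤ, 0 < M1 ∧ ¬ 2 ∣ M1 ∧ 0 < M2 ∧ ¬ 2 ∣ M2 ∧
      ∀ t : ℕ,
        (0 < M1 + 2 ^ (q1 + s2 + 1) * (t : ℤ) ∧ ¬ 2 ∣ (M1 + 2 ^ (q1 + s2 + 1) * (t : ℤ))) ∧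
        (0 < M2 + 2 * 3 ^ s1 * (t : ℤ) ∧ ¬ 2 ∣ (M2 + 2 * 3 ^ s1 * (t : ℤ))) ∧
        2 ^ (q1 + s2) * (M2 + 2 * 3 ^ s1 * (t : ℤ))
          - 3 ^ s1 * (M1 + 2 ^ (q1 + s2 + 1) * (t : ℤ)) = 2 ^ q1 - 1 := by
  set P : ℤ := 2 ^ (q1 + s2) with hP
  set N : ℤ := 2 ^ (q1 + s2 + 1) with hN
  have hNP : N = 2 * P := by rw [hN, hP, pow_succ]; ring
  have hcop : IsCoprime ((3 : ℤ) ^ s1) N := by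
    rw [hN]
    exact (IsCoprime.pow (by
      rw [Int.isCoprime_iff_gcd_eq_one]; decide) : IsCoprime ((3:ℤ)^s1) ((2:ℤ)^(q1+s2+1)))
  obtain ⟨a, b, hab⟩ := hcop
  set T : ℤ := P - 2 ^ q1 + 1 with hT
  set c : ℤ := a * T with hc
  set k : ℤ := -(b * T) with hk
  have key : (3 : ℤ) ^ s1 * c = T + N * k := by
    have : (a * 3 ^ s1 + b * N) * T = T := by rw [hab]; ring
    rw [hc, hk]; linarith [this]
  set w : ℤ := |c| + |k| + 1 with hw
  have hwpos : 0 < w := by positivity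
  set M1 : ℤ := c + N * w with hM1
  set M2 : ℤ := 1 + 2 * (k + 3 ^ s1 * w) with hM2
  have hN2 : (2 : ℤ) ≤ N := by
    rw [hN]; calc (2:ℤ) = 2^1 := by ring
    _ ≤ 2 ^ (q1 + s2 + 1) := by apply pow_le_pow_right₀ <;> omega
  have h3 : (1 : ℤ) ≤ 3 ^ s1 := by calc (1:ℤ) = 1 ^ s1 := (one_pow s1).symm
    _ ≤ 3 ^ s1 := pow_le_pow_left₀ (by norm_num) (by norm_num) s1
  have hTodd : ¬ (2 : ℤ) ∣ T := by
    have h1 : (2 : ℤ) ∣ P := by rw [hP]; exact dvd_pow_self 2 (by omega)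
    have h2 : (2 : ℤ) ∣ 2 ^ q1 := dvd_pow_self 2 (by omega)
    rw [hT]; omega
  have hNeven : (2 : ℤ) ∣ N := by rw [hN]; exact dvd_pow_self 2 (by omega)
  -- general facts for the shifted family
  have main : ∀ u : ℤ, 0 ≤ u →
      (0 < M1 + N * u ∧ ¬ 2 ∣ (M1 + N * u)) ∧
      (0 < M2 + 2 * 3 ^ s1 * u ∧ ¬ 2 ∣ (M2 + 2 * 3 ^ s1 * u)) ∧
      P * (M2 + 2 * 3 ^ s1 * u) - 3 ^ s1 * (M1 + N * u) = 2 ^ q1 - 1 := by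
    intro u hu
    have hca : -|c| ≤ c := neg_abs_le c
    have hka : -|k| ≤ k := neg_abs_le k
    have h3w : w ≤ 3 ^ s1 * w := le_mul_of_one_le_left (le_of_lt hwpos) h3
    have hpos1 : 0 < M1 + N * u := by
      have hNu : 0 ≤ N * u := mul_nonneg (by linarith) hu
      have : 2 * w ≤ N * w := by
        apply mul_le_mul_of_nonneg_right hN2 (le_of_lt hwpos)
      rw [hM1, hw]; nlinarith [abs_nonneg c, abs_nonneg k]
    have hpos2 : 0 < M2 + 2 * 3 ^ s1 * u := by
      have : 0 ≤ 2 * 3 ^ s1 * u := by positivity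
      rw [hM2, hw]; nlinarith [abs_nonneg c, abs_nonneg k]
    refine ⟨⟨hpos1, ?_⟩, ⟨hpos2, ?_⟩, ?_⟩
    · intro hdvd
      apply hTodd
      have hkey2 : (3:ℤ) ^ s1 * (M1 + N * u) = T + N * (k + 3 ^ s1 * (w + u)) := by
        rw [hM1]; linear_combination key
      have h3odd : ¬ (2:ℤ) ∣ 3 ^ s1 := by
        intro h; exact (by norm_num : ¬ (2:ℤ) ∣ 3) (Int.Prime.dvd_pow' (by norm_num) h)
      obtain ⟨m, hm⟩ := hdvd
      obtain ⟨n, hn⟩ := hNeven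
      exact ⟨3 ^ s1 * m - n * (k + 3 ^ s1 * (w + u)), by
        linear_combination (-1:ℤ) * hkey2 + (3:ℤ) ^ s1 * hm - (k + 3 ^ s1 * (w + u)) * hn⟩
    · intro hdvd
      obtain ⟨m, hm⟩ := hdvd
      have hodd : M2 + 2 * 3 ^ s1 * u = 2 * (k + 3 ^ s1 * w + 3 ^ s1 * u) + 1 := by
        rw [hM2]; ring
      omega
    · rw [hM1, hM2, hNP]; linear_combination (-1 : ℤ) * key
  obtain ⟨⟨h1, h2⟩, ⟨h3', h4⟩, _⟩ := main 0 le_rfl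
  simp only [mul_zero, add_zero] at h1 h2 h3' h4
  refine ⟨M1, M2, h1, h2, h3', h4, fun t => ?_⟩
  have := main t (Int.natCast_nonneg t)
  exact this
end

section
/- For any positive integers s_1, q_1, s_2 there exist positive odd integers m_1 and m_2 such that the odd number n = 2^{s_1} · m_1 − 1 satisfies: the 2s_1-th iterate of the Collatz map applied to n equals 3^{s_1} · m_1 − 1 = 2^{q_1} · (2^{s_2} · m_2 − 1), and the (2 s_1 + q_1)-th iterate of the Collatz map applied to n equals 2^{s_2} · m_2 − 1. That is, there is an odd number whose finite Collatz evolution pattern begins s_1, q_1, s_2. -/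
lemma collatz_up (s : ℕ) : ∀ m : ℕ, 0 < m →
    collatz^[2 * s] (2 ^ s * m - 1) = 3 ^ s * m - 1 := by
  induction s with
  | zero => simp
  | succ s ih =>
    intro m hm
    have hk : 1 ≤ 2 ^ s * m := Nat.one_le_iff_ne_zero.mpr (by positivity)
    set k := 2 ^ s * m with hkdef
    have hx : 2 ^ (s + 1) * m - 1 = 2 * k - 1 := by rw [hkdef, pow_succ]; ring_nf
    have h1 : collatz (2 * k - 1) = 2 * (3 * k - 1) := by
      unfold collatz
      rw [if_pos (by omega)]; omega
    have h2 : collatz (2 * (3 * k - 1)) = 3 * k - 1 := by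
      unfold collatz
      rw [if_neg (by omega)]; omega
    have h3 : (3 : ℕ) * k - 1 = 2 ^ s * (3 * m) - 1 := by rw [hkdef]; ring_nf
    have h4 : 2 * (s + 1) = 2 * s + 2 := by ring
    rw [hx, h4, Function.iterate_add_apply]
    have h5 : collatz^[2] (2 * k - 1) = 2 ^ s * (3 * m) - 1 := by
      rw [Function.iterate_succ_apply, Function.iterate_one, h1, h2, h3]
    rw [h5, ih (3 * m) (by omega)]
    have : (3:ℕ) ^ (s+1) * m = 3 ^ s * (3 * m) := by ring
    rw [this]

lemma collatz_down (q : ℕ) : ∀ y : ℕ, y % 2 = 1 → collatz^[q] (2 ^ q * y) = y := by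
  induction q with
  | zero => simp
  | succ q ih =>
    intro y hy
    rw [Function.iterate_succ_apply]
    have hdvd : 2 ∣ 2 ^ (q + 1) * y :=
      Dvd.dvd.mul_right (dvd_pow_self 2 (Nat.succ_ne_zero q)) y
    have h1 : collatz (2 ^ (q + 1) * y) = 2 ^ q * y := by
      unfold collatz
      rw [if_neg (by omega), pow_succ, mul_comm (2 ^ q) 2, mul_assoc,
        Nat.mul_div_cancel_left _ (by norm_num)]
    rw [h1]; exact ih y hy

/-- For any positive integers `s1, q1, s2` there is an odd number whose finite
Collatz evolution pattern begins `s1, q1, s2`: there exist positive odd integers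
`m1, m2` such that for `n = 2 ^ s1 * m1 - 1` the `2 s1`-th iterate of the Collatz
map at `n` equals `3 ^ s1 * m1 - 1 = 2 ^ q1 * (2 ^ s2 * m2 - 1)` and the
`(2 s1 + q1)`-th iterate at `n` equals `2 ^ s2 * m2 - 1`. -/
theorem sqs_pattern_realizable (s1 q1 s2 : ℕ) (hs1 : 1 ≤ s1) (hq1 : 1 ≤ q1) (hs2 : 1 ≤ s2) :
    ∃ m1 m2 : ℕ, 0 < m1 ∧ ¬ 2 ∣ m1 ∧ 0 < m2 ∧ ¬ 2 ∣ m2 ∧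
      collatz^[2 * s1] (2 ^ s1 * m1 - 1) = 3 ^ s1 * m1 - 1 ∧
      3 ^ s1 * m1 - 1 = 2 ^ q1 * (2 ^ s2 * m2 - 1) ∧
      collatz^[2 * s1 + q1] (2 ^ s1 * m1 - 1) = 2 ^ s2 * m2 - 1 := by
  set N := 3 ^ s1 with hN
  have hNpos : 0 < N := by positivity
  have hNodd : N % 2 = 1 := by rw [hN, Nat.pow_mod]; norm_num
  have hcop : Nat.Coprime (2 ^ (q1 + s2)) N := by rw [hN]; exact Nat.Coprime.pow _ _ (by norm_num)
  haveI : NeZero N := ⟨hNpos.ne'⟩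
  set c : ZMod N := ((2 ^ q1 - 1 : ℕ) : ZMod N) * ((2 ^ (q1 + s2) : ℕ) : ZMod N)⁻¹ with hc
  set a0 := c.val with ha0
  set m2 := if (a0 + N) % 2 = 1 then a0 + N else a0 + 2 * N with hm2def
  have hm2mod : ((m2 : ℕ) : ZMod N) = c := by
    have h1 : ((a0 : ℕ) : ZMod N) = c := by rw [ha0, ZMod.natCast_val, ZMod.cast_id]
    rw [hm2def]
    split <;> push_cast <;> simp [h1]
  have hm2odd : m2 % 2 = 1 := by
    rw [hm2def]; split
    · assumption
    · omega
  have hm2pos : 0 < m2 := by rw [hm2def]; split <;> omega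
  have hsolve : ((2 ^ (q1 + s2) : ℕ) : ZMod N) * c = ((2 ^ q1 - 1 : ℕ) : ZMod N) := by
    rw [hc, ← mul_assoc, mul_comm ((2 ^ (q1+s2) : ℕ) : ZMod N), mul_assoc,
      ZMod.coe_mul_inv_eq_one _ hcop, mul_one]
  set T := 2 ^ (q1 + s2) * m2 + 1 - 2 ^ q1 with hT
  have h2q : 1 ≤ 2 ^ q1 := Nat.one_le_two_pow
  have h2s : 2 ≤ 2 ^ s2 := by
    calc (2:ℕ) = 2 ^ 1 := rfl
    _ ≤ 2 ^ s2 := Nat.pow_le_pow_right (by norm_num) hs2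
  have h2qs : 2 ^ q1 * 2 ≤ 2 ^ (q1 + s2) * m2 := by
    calc 2 ^ q1 * 2 ≤ 2 ^ (q1 + s2) * 1 := by rw [mul_one, pow_add]; nlinarith
      _ ≤ 2 ^ (q1 + s2) * m2 := Nat.mul_le_mul_left _ hm2pos
  have hTeq : T + 2 ^ q1 = 2 ^ (q1 + s2) * m2 + 1 := by omega
  have hdvd : N ∣ T := by
    have hz : ((T : ℕ) : ZMod N) = 0 := by
      have hcast : ((T : ℕ) : ZMod N) + ((2 ^ q1 : ℕ) : ZMod N)
          = ((2 ^ (q1 + s2) * m2 : ℕ) : ZMod N) + 1 := by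
        rw [← Nat.cast_add, hTeq]; push_cast; ring
      have h2 : ((2 ^ (q1 + s2) * m2 : ℕ) : ZMod N) = ((2 ^ q1 - 1 : ℕ) : ZMod N) := by
        push_cast
        rw [← hm2mod] at hsolve
        push_cast at hsolve
        exact hsolve
      have h3 : ((2 ^ q1 - 1 : ℕ) : ZMod N) + 1 = ((2 ^ q1 : ℕ) : ZMod N) := by
        have he : (2 ^ q1 - 1) + 1 = 2 ^ q1 := by omega
        conv_rhs => rw [← he]
        rw [Nat.cast_add, Nat.cast_one]
      rw [h2, h3] at hcast
      have hc2 : ((T : ℕ) : ZMod N) + ((2 ^ q1 : ℕ) : ZMod N)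
          = 0 + ((2 ^ q1 : ℕ) : ZMod N) := by rw [hcast, zero_add]
      exact add_right_cancel hc2
    exact (ZMod.natCast_eq_zero_iff T N).mp hz
  obtain ⟨m1, hm1⟩ := hdvd
  have hTodd : T % 2 = 1 := by
    have hd1 : 2 ∣ 2 ^ q1 := dvd_pow_self 2 (by omega)
    have hd2 : 2 ∣ 2 ^ (q1 + s2) := dvd_pow_self 2 (by omega)
    obtain ⟨u, hu⟩ := hd1; obtain ⟨v, hv⟩ := hd2
    have : 2 ^ (q1 + s2) * m2 = 2 * (v * m2) := by rw [hv]; ring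
    omega
  have hm1odd : m1 % 2 = 1 := by
    rcases Nat.even_or_odd m1 with ⟨w, hw⟩ | h
    · exfalso
      have : T = 2 * (N * w) := by rw [hm1, hw]; ring
      omega
    · exact Nat.odd_iff.mp h
  have hm1pos : 0 < m1 := by
    rcases Nat.eq_zero_or_pos m1 with h | h
    · exfalso; rw [h, mul_zero] at hm1; omega
    · exact h
  have hs2m : 2 ≤ 2 ^ s2 * m2 := le_trans h2s (Nat.le_mul_of_pos_right _ hm2pos)
  have hkey : 3 ^ s1 * m1 = 2 ^ q1 * (2 ^ s2 * m2 - 1) + 1 := by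
    rw [← hN, ← hm1]
    have hB : 2 ^ s2 * m2 = (2 ^ s2 * m2 - 1) + 1 := by omega
    have hAB : 2 ^ (q1 + s2) * m2 = 2 ^ q1 * (2 ^ s2 * m2 - 1) + 2 ^ q1 := by
      rw [pow_add, mul_assoc]
      conv_lhs => rw [hB]
      ring
    omega
  refine ⟨m1, m2, hm1pos, by omega, hm2pos, by omega, collatz_up s1 m1 hm1pos, by rw [hkey]; omega, ?_⟩
  rw [add_comm, Function.iterate_add_apply, collatz_up s1 m1 hm1pos,
    show 3 ^ s1 * m1 - 1 = 2 ^ q1 * (2 ^ s2 * m2 - 1) by rw [hkey]; omega]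
  refine collatz_down q1 _ ?_
  obtain ⟨w, hw⟩ : 2 ∣ 2 ^ s2 * m2 := Dvd.dvd.mul_right (dvd_pow_self 2 (by omega)) m2
  omega
end

section
/- Let r be a positive integer and let s_1, …, s_{r+1} and q_1, …, q_r be positive integers. Then there exist positive odd integers m_1, …, m_{r+1} such that for every i with 1 ≤ i ≤ r, the equation 3^{s_i} · m_i − 1 = 2^{q_i} · (2^{s_{i+1}} · m_{i+1} − 1) holds. -/
/-!
Write the `i`-th equation without truncated subtraction as
`3 ^ s i * m i + 2 ^ q i = 2 ^ (q i + s (i + 1)) * m (i + 1) + 1`, and solve it backwards.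
Given `m (i + 1)`, the equation determines `m i`, which is a natural number as soon as the
right-hand side is `≡ 2 ^ q i` modulo `3 ^ s i`; it is then automatically odd because
`q i ≥ 1`. Since `2` is invertible modulo powers of `3`, that congruence, and even a
prescribed residue of `m i` modulo `3 ^ e`, is a condition on `m (i + 1)` modulo
`3 ^ (s i + e)`. So the induction on `r` goes through once it prescribes the residue of
`m 0` modulo an arbitrary power of `3`.
-/

theorem Nat.exists_odd_modEq {n : ℕ} (hn : Odd n) (a : ℕ) :
    ∃ m, Odd m ∧ m ≡ a [MOD n] := by
  by_cases ha : Odd a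
  · exact ⟨a, ha, rfl⟩
  · exact ⟨a + n, (Nat.not_odd_iff_even.mp ha).add_odd hn, Nat.add_modEq_right⟩

theorem Nat.exists_mul_add_modEq {k N : ℕ} [NeZero N] (hk : k.Coprime N) (b t : ℕ) :
    ∃ c, k * c + b ≡ t [MOD N] := by
  set u := ZMod.unitOfCoprime k hk
  refine ⟨((u⁻¹ : (ZMod N)ˣ) * (t - b) : ZMod N).val, ?_⟩
  rw [← ZMod.natCast_eq_natCast_iff]
  push_cast
  rw [ZMod.natCast_zmod_val, ← mul_assoc, show (k : ZMod N) = u from rfl, Units.mul_inv, one_mul,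
    sub_add_cancel]

theorem odd_of_pow_mul_add_pow_eq {s q s' m m' : ℕ} (hq : 1 ≤ q)
    (h : 3 ^ s * m + 2 ^ q = 2 ^ (q + s') * m' + 1) : Odd m := by
  have h2q : 2 ∣ 2 ^ q := dvd_pow_self 2 (by omega)
  have h2q' : 2 ∣ 2 ^ (q + s') * m' := (dvd_pow_self 2 (by omega)).mul_right _
  have h3m : Odd (3 ^ s * m) := by
    rw [Nat.odd_iff]
    omega
  exact (Nat.odd_mul.mp h3m).2

theorem exists_odd_pow_mul_add_pow_eq_of_modEq {s q s' e a m' : ℕ} (hq : 1 ≤ q) (hm' : 0 < m')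
    (h : 2 ^ (q + s') * m' + 1 ≡ 2 ^ q + 3 ^ s * a [MOD 3 ^ (s + e)]) :
    ∃ m, Odd m ∧ 3 ^ s * m + 2 ^ q = 2 ^ (q + s') * m' + 1 ∧ m ≡ a [MOD 3 ^ e] := by
  have hle : 2 ^ q ≤ 2 ^ (q + s') * m' + 1 :=
    calc 2 ^ q ≤ 2 ^ (q + s') := Nat.pow_le_pow_right (by norm_num) (by omega)
      _ ≤ 2 ^ (q + s') * m' := Nat.le_mul_of_pos_right _ hm'
      _ ≤ 2 ^ (q + s') * m' + 1 := by omega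
  have hmod : 2 ^ q ≡ 2 ^ (q + s') * m' + 1 [MOD 3 ^ s] :=
    calc 2 ^ q ≡ 2 ^ q + 3 ^ s * a [MOD 3 ^ s] := by
          simp [Nat.ModEq, Nat.add_mul_mod_self_left]
      _ ≡ 2 ^ (q + s') * m' + 1 [MOD 3 ^ s] := (h.of_dvd (pow_dvd_pow 3 (by omega))).symm
  obtain ⟨m, hm⟩ := (Nat.modEq_iff_dvd' hle).mp hmod
  have heq : 3 ^ s * m + 2 ^ q = 2 ^ (q + s') * m' + 1 := by omega
  refine ⟨m, odd_of_pow_mul_add_pow_eq hq heq, heq, ?_⟩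
  have h' : 2 ^ q + 3 ^ s * m ≡ 2 ^ q + 3 ^ s * a [MOD 3 ^ s * 3 ^ e] := by
    rw [← pow_add, add_comm (2 ^ q), heq]
    exact h
  exact Nat.ModEq.mul_left_cancel' (by positivity) (h'.add_left_cancel' _)

theorem exists_chain_modEq (r : ℕ) (s q : ℕ → ℕ) (hq : ∀ i < r, 1 ≤ q i) (e a : ℕ) :
    ∃ m : ℕ → ℕ, (∀ i ≤ r, Odd (m i)) ∧
      (∀ i < r, 3 ^ s i * m i + 2 ^ q i = 2 ^ (q i + s (i + 1)) * m (i + 1) + 1) ∧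
      m 0 ≡ a [MOD 3 ^ e] := by
  induction r generalizing s q e a with
  | zero =>
    obtain ⟨m, hm, hma⟩ := Nat.exists_odd_modEq (Odd.pow (by decide : Odd 3) (n := e)) a
    exact ⟨fun _ => m, fun _ _ => hm, fun i hi => absurd hi (Nat.not_lt_zero i), hma⟩
  | succ r ih =>
    have hcop : (2 ^ (q 0 + s 1)).Coprime (3 ^ (s 0 + e)) :=
      Nat.Coprime.pow _ _ (by norm_num)
    obtain ⟨c, hc⟩ := Nat.exists_mul_add_modEq hcop 1 (2 ^ q 0 + 3 ^ s 0 * a)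
    obtain ⟨m', hm'odd, hm'eq, hm'c⟩ :=
      ih (fun i => s (i + 1)) (fun i => q (i + 1)) (fun i hi => hq (i + 1) (by omega)) (s 0 + e) c
    have hlink : 2 ^ (q 0 + s 1) * m' 0 + 1 ≡ 2 ^ q 0 + 3 ^ s 0 * a [MOD 3 ^ (s 0 + e)] :=
      ((hm'c.mul_left _).add_right 1).trans hc
    obtain ⟨m0, hm0odd, hm0eq, hm0a⟩ :=
      exists_odd_pow_mul_add_pow_eq_of_modEq (hq 0 (by omega)) (hm'odd 0 (by omega)).pos hlink
    refine ⟨fun | 0 => m0 | j + 1 => m' j, ?_, ?_, hm0a⟩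
    · rintro (_ | j) hj
      · exact hm0odd
      · exact hm'odd j (by omega)
    · rintro (_ | j) hj
      · exact hm0eq
      · exact hm'eq j (by omega)

theorem pow_mul_sub_one_eq_of_add_eq {s q s' m m' : ℕ} (hm' : 0 < m')
    (h : 3 ^ s * m + 2 ^ q = 2 ^ (q + s') * m' + 1) :
    3 ^ s * m - 1 = 2 ^ q * (2 ^ s' * m' - 1) := by
  have hpos : 0 < 2 ^ s' * m' := by positivity
  rw [Nat.mul_sub, mul_one, ← mul_assoc, ← pow_add]
  omega

theorem chain_equations_solvable_general (r : ℕ) (s q : ℕ → ℕ)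
    (hq : ∀ i < r, 1 ≤ q i) :
    ∃ m : ℕ → ℕ, (∀ i ≤ r, 0 < m i ∧ ¬ 2 ∣ m i) ∧
      ∀ i < r, 3 ^ s i * m i - 1 = 2 ^ q i * (2 ^ s (i + 1) * m (i + 1) - 1) := by
  obtain ⟨m, hodd, heq, -⟩ := exists_chain_modEq r s q hq 0 0
  refine ⟨m, fun i hi => ⟨(hodd i hi).pos, ?_⟩,
    fun i hi => pow_mul_sub_one_eq_of_add_eq (hodd (i + 1) hi).pos (heq i hi)⟩
  rw [← even_iff_two_dvd, Nat.not_even_iff_odd]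
  exact hodd i hi

/-- For a positive integer `r` and positive integers `s 0, …, s r` and
`q 0, …, q (r-1)` (indexed from `0` instead of `1`), there exist positive odd
integers `m 0, …, m r` such that for every `i < r` the chain equation
`3 ^ s i * m i - 1 = 2 ^ q i * (2 ^ s (i+1) * m (i+1) - 1)` holds. -/
theorem chain_equations_solvable (r : ℕ) (hr : 1 ≤ r) (s q : ℕ → ℕ)
    (hs : ∀ i ≤ r, 1 ≤ s i) (hq : ∀ i < r, 1 ≤ q i) :
    ∃ m : ℕ → ℕ, (∀ i ≤ r, 0 < m i ∧ ¬ 2 ∣ m i) ∧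
      ∀ i < r, 3 ^ s i * m i - 1 = 2 ^ q i * (2 ^ s (i + 1) * m (i + 1) - 1) :=
  chain_equations_solvable_general r s q hq
end

section
/- (Main theorem) Let r be a positive integer and let s_1, …, s_{r+1} and q_1, …, q_r be positive integers (a finite Collatz evolution pattern). Then there exists a positive odd integer n and positive odd integers m_1, …, m_{r+1} such that, setting T_0 = 0 and T_i = Σ_{j=1}^{i} (2·s_j + q_j) for 1 ≤ i ≤ r: n = 2^{s_1} · m_1 − 1, and for every i with 1 ≤ i ≤ r the T_{i-1}-th iterate of the Collatz map applied to n equals 2^{s_i} · m_i − 1, the (T_{i-1} + 2 s_i)-th iterate equals 3^{s_i} · m_i − 1 = 2^{q_i} · (2^{s_{i+1}} · m_{i+1} − 1), and the T_i-th iterate equals 2^{s_{i+1}} · m_{i+1} − 1. In other words, any finite evolution pattern is implemented by some odd number's Collatz trajectory. -/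
lemma collatz_pow2 (k y : ℕ) : collatz^[k] (2 ^ k * y) = y := by
  induction k with
  | zero => simp
  | succ k ih =>
    rw [Function.iterate_succ_apply]
    have h1 : 2 ^ (k+1) * y = 2 * (2 ^ k * y) := by ring
    have h2 : collatz (2 * (2 ^ k * y)) = 2 ^ k * y := by
      unfold collatz; simp [Nat.mul_mod_right]
    rw [h1, h2, ih]

lemma collatz_pump (k m : ℕ) (hm : m % 2 = 1) :
    collatz^[2 * k] (2 ^ k * m - 1) = 3 ^ k * m - 1 := by
  induction k generalizing m with
  | zero => simp
  | succ k ih =>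
    have hpos : 2 ≤ 2 ^ (k+1) * m := by
      have : 2 ≤ 2 ^ (k+1) := by
        have := Nat.one_lt_two_pow (n := k+1) (by omega); omega
      have : 1 ≤ m := by omega
      nlinarith
    have hx : (2 ^ (k+1) * m - 1) % 2 = 1 := by
      have : 2 ^ (k+1) * m % 2 = 0 := by
        have : 2 ^ (k+1) * m = 2 * (2 ^ k * m) := by ring
        simp [this, Nat.mul_mod_right]
      omega
    have step1 : collatz (2 ^ (k+1) * m - 1) = 2 * (3 * 2 ^ k * m - 1) := by
      unfold collatz
      simp only [hx, if_pos]
      have e1 : 2 ^ (k+1) * m = 2 * (2 ^ k * m) := by ring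
      have e2 : 3 * 2 ^ k * m = 3 * (2 ^ k * m) := by ring
      omega
    have step2 : collatz (2 * (3 * 2 ^ k * m - 1)) = 2 ^ k * (3 * m) - 1 := by
      unfold collatz
      simp only [Nat.mul_mod_right]
      norm_num
      have e1 : 3 * 2 ^ k * m = 3 * (2 ^ k * m) := by ring
      have e2 : 2 ^ k * (3 * m) = 3 * (2 ^ k * m) := by ring
      omega
    have : 2 * (k + 1) = 2 * k + 1 + 1 := by ring
    rw [this, Function.iterate_succ_apply, Function.iterate_succ_apply, step1, step2,
      ih (3 * m) (by omega)]
    have : 3 ^ (k+1) * m = 3 ^ k * (3 * m) := by ring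
    rw [this]


def Spart (s : ℕ → ℕ) (r i : ℕ) : ℕ := ∑ j ∈ Finset.Ico i r, s j

def Dpart (s q : ℕ → ℕ) (i j : ℕ) : ℕ := ∑ k ∈ Finset.Ico i j, (q k + s (k+1))

def Cpart (s q : ℕ → ℕ) (r i : ℕ) : ℤ :=
  ∑ j ∈ Finset.Ico i r, 2 ^ (Dpart s q i j) * 3 ^ (Spart s r (j+1)) * (2 ^ (q j) - 1)

lemma Spart_rec (s : ℕ → ℕ) (r i : ℕ) (h : i < r) :
    Spart s r i = s i + Spart s r (i+1) := by
  unfold Spart; rw [Finset.sum_eq_sum_Ico_succ_bot h]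

lemma Dpart_rec (s q : ℕ → ℕ) (i j : ℕ) (h : i < j) :
    Dpart s q i j = (q i + s (i+1)) + Dpart s q (i+1) j := by
  unfold Dpart; rw [Finset.sum_eq_sum_Ico_succ_bot h]

lemma Cpart_rec (s q : ℕ → ℕ) (r i : ℕ) (h : i < r) :
    Cpart s q r i = 3 ^ (Spart s r (i+1)) * (2 ^ (q i) - 1)
      + 2 ^ (q i + s (i+1)) * Cpart s q r (i+1) := by
  unfold Cpart
  rw [Finset.sum_eq_sum_Ico_succ_bot h]
  have hD0 : Dpart s q i i = 0 := by unfold Dpart; simp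
  rw [hD0]
  have : ∀ j ∈ Finset.Ico (i+1) r,
      (2:ℤ) ^ (Dpart s q i j) * 3 ^ (Spart s r (j+1)) * (2 ^ (q j) - 1)
      = 2 ^ (q i + s (i+1)) * (2 ^ (Dpart s q (i+1) j) * 3 ^ (Spart s r (j+1)) * (2 ^ (q j) - 1)) := by
    intro j hj
    rw [Finset.mem_Ico] at hj
    rw [Dpart_rec s q i j (by omega), pow_add]
    ring
  rw [Finset.sum_congr rfl this, ← Finset.mul_sum]
  ring

lemma Cpart_nonneg (s q : ℕ → ℕ) (r i : ℕ) : 0 ≤ Cpart s q r i := by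
  unfold Cpart
  apply Finset.sum_nonneg
  intro j hj
  have h1 : (1:ℤ) ≤ 2 ^ (q j) := one_le_pow₀ (by norm_num)
  have h2 : (0:ℤ) ≤ 2 ^ (Dpart s q i j) := by positivity
  have h3 : (0:ℤ) ≤ 3 ^ (Spart s r (j+1)) := by positivity
  have h4 : (0:ℤ) ≤ 2 ^ (q j) - 1 := by linarith
  positivity


lemma exists_seed (S E0 : ℕ) (C0 : ℤ) (N : ℕ) :
    ∃ x : ℕ, x % 2 = 1 ∧ N ≤ x ∧ ((3:ℤ) ^ S) ∣ 2 ^ E0 * x - C0 := by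
  set P : ℕ := 3 ^ S with hP
  haveI : NeZero P := ⟨by positivity⟩
  have hcop : Nat.Coprime 2 P := Nat.Coprime.pow_right S (by norm_num)
  set u : (ZMod P)ˣ := ZMod.unitOfCoprime 2 hcop with hu
  set v : ZMod P := ((u⁻¹ : (ZMod P)ˣ) : ZMod P) ^ E0 * (C0 : ZMod P) with hv
  have hcoe : ((u : ZMod P)) = 2 := by
    rw [hu, ZMod.coe_unitOfCoprime]; norm_num
  have hveq : (2 : ZMod P) ^ E0 * v = (C0 : ZMod P) := by
    rw [hv, ← hcoe, ← mul_assoc, ← mul_pow]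
    have : ((u : ZMod P)) * ((u⁻¹ : (ZMod P)ˣ) : ZMod P) = 1 := u.mul_inv
    rw [this, one_pow, one_mul]
  set x0 : ℕ := v.val with hx0
  have hx0coe : ((x0 : ℕ) : ZMod P) = v := ZMod.natCast_zmod_val v
  have hdvd0 : (P : ℤ) ∣ 2 ^ E0 * (x0 : ℤ) - C0 := by
    rw [← ZMod.intCast_zmod_eq_zero_iff_dvd]
    push_cast
    rw [hx0coe, hveq, sub_self]
  have hPodd : P % 2 = 1 := by
    rw [hP, Nat.pow_mod]; norm_num
  have hP1 : 1 ≤ P := Nat.one_le_iff_ne_zero.mpr (NeZero.ne P)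
  have hodd : (x0 + P * ((x0 + 1) % 2) + 2 * P * N) % 2 = 1 := by
    have hb : (x0 + 1) % 2 = 0 ∧ x0 % 2 = 1 ∨ (x0 + 1) % 2 = 1 ∧ x0 % 2 = 0 := by omega
    have e1 : 2 * P * N = 2 * (P * N) := by ring
    rcases hb with ⟨h1, h2⟩ | ⟨h1, h2⟩ <;> rw [h1] <;> simp <;> omega
  have hge : N ≤ x0 + P * ((x0 + 1) % 2) + 2 * P * N := by
    have hN : N ≤ 2 * P * N := Nat.le_mul_of_pos_left N (by omega)
    omega
  refine ⟨x0 + P * ((x0 + 1) % 2) + 2 * P * N, hodd, hge, ?_⟩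
  have hPZ : ((3:ℤ) ^ S) = (P : ℤ) := by rw [hP]; push_cast; ring
  rw [hPZ]
  have key : (2:ℤ) ^ E0 * ((x0 + P * ((x0 + 1) % 2) + 2 * P * N : ℕ) : ℤ) - C0
      = (2 ^ E0 * (x0 : ℤ) - C0) + (P : ℤ) * (2 ^ E0 * (((x0 + 1) % 2 : ℕ) + 2 * N)) := by
    push_cast; ring
  rw [key]
  exact dvd_add hdvd0 (Dvd.intro _ rfl)

/-- Main theorem: any finite Collatz evolution pattern
`s 0, q 0, s 1, q 1, …, s (r-1), q (r-1), s r` (indexed from `0` instead of `1`)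
of positive integers is implemented by the Collatz trajectory of some positive odd
integer `n`: there are positive odd integers `m 0, …, m r` such that, with
`T i = ∑_{j < i} (2 * s j + q j)`, we have `n = 2 ^ s 0 * m 0 - 1` and for every
`i < r` the `T i`-th iterate of the Collatz map at `n` equals `2 ^ s i * m i - 1`,
the `(T i + 2 * s i)`-th iterate equals
`3 ^ s i * m i - 1 = 2 ^ q i * (2 ^ s (i+1) * m (i+1) - 1)`, and the `T (i+1)`-th
iterate equals `2 ^ s (i+1) * m (i+1) - 1`. -/
theorem finite_pattern_realizable (r : ℕ) (hr : 1 ≤ r) (s q : ℕ → ℕ)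
    (hs : ∀ i ≤ r, 1 ≤ s i) (hq : ∀ i < r, 1 ≤ q i) :
    ∃ n : ℕ, ∃ m : ℕ → ℕ,
      0 < n ∧ ¬ 2 ∣ n ∧
      (∀ i ≤ r, 0 < m i ∧ ¬ 2 ∣ m i) ∧
      n = 2 ^ s 0 * m 0 - 1 ∧
      ∀ i < r,
        collatz^[∑ j ∈ Finset.range i, (2 * s j + q j)] n = 2 ^ s i * m i - 1 ∧
        collatz^[(∑ j ∈ Finset.range i, (2 * s j + q j)) + 2 * s i] n
          = 3 ^ s i * m i - 1 ∧
        3 ^ s i * m i - 1 = 2 ^ q i * (2 ^ s (i + 1) * m (i + 1) - 1) ∧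
        collatz^[∑ j ∈ Finset.range (i + 1), (2 * s j + q j)] n
          = 2 ^ s (i + 1) * m (i + 1) - 1 := by
  classical
  set CB : ℕ := (∑ i ∈ Finset.range (r+1), (Cpart s q r i).toNat) + 1 with hCB
  obtain ⟨x, hxodd, hxge, hxdvd⟩ := exists_seed (Spart s r 0) (Dpart s q 0 r) (Cpart s q r 0) CB
  have hCbound : ∀ i ≤ r, Cpart s q r i < (CB : ℤ) := by
    intro i hi
    have h1 : (Cpart s q r i).toNat ≤ ∑ i ∈ Finset.range (r+1), (Cpart s q r i).toNat := by
      apply Finset.single_le_sum (f := fun i => (Cpart s q r i).toNat)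
      · intro j _; exact Nat.zero_le _
      · exact Finset.mem_range.mpr (by omega)
    have h2 : Cpart s q r i = ((Cpart s q r i).toNat : ℤ) :=
      (Int.toNat_of_nonneg (Cpart_nonneg s q r i)).symm
    have h3 : (Cpart s q r i).toNat < CB := by rw [hCB]; omega
    rw [h2]
    exact_mod_cast h3
  have hdvd : ∀ i, i ≤ r → (3:ℤ) ^ (Spart s r i) ∣ 2 ^ (Dpart s q i r) * x - Cpart s q r i := by
    intro i
    induction i with
    | zero => intro _; exact hxdvd
    | succ i ih =>
      intro hir
      have hilt : i < r := by omega
      have hprev := ih (by omega)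
      have hid : (2:ℤ) ^ (Dpart s q i r) * x - Cpart s q r i
          = 2 ^ (q i + s (i+1)) * (2 ^ (Dpart s q (i+1) r) * x - Cpart s q r (i+1))
            - 3 ^ (Spart s r (i+1)) * (2 ^ (q i) - 1) := by
        rw [Dpart_rec s q i r hilt, Cpart_rec s q r i hilt, pow_add]
        ring
      have hdd : (3:ℤ) ^ (Spart s r (i+1)) ∣
          2 ^ (q i + s (i+1)) * (2 ^ (Dpart s q (i+1) r) * x - Cpart s q r (i+1)) := by
        have h3 : (3:ℤ) ^ (Spart s r (i+1)) ∣ 3 ^ (Spart s r i) :=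
          pow_dvd_pow 3 (by rw [Spart_rec s r i hilt]; omega)
        have h6 := h3.trans hprev
        rw [hid] at h6
        have h4 : (3:ℤ) ^ (Spart s r (i+1)) ∣ 3 ^ (Spart s r (i+1)) * (2 ^ (q i) - 1) :=
          Dvd.intro _ rfl
        have h5 := dvd_add h6 h4
        simpa using h5
      have hcop : IsCoprime ((3:ℤ) ^ (Spart s r (i+1))) ((2:ℤ) ^ (q i + s (i+1))) :=
        (Int.isCoprime_iff_gcd_eq_one.mpr (by norm_num)).pow
      exact hcop.dvd_of_dvd_mul_left hdd
  -- the m sequence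
  set m : ℕ → ℕ := fun i =>
    ((2 ^ (Dpart s q i r) * (x:ℤ) - Cpart s q r i) / 3 ^ (Spart s r i)).toNat with hm
  have hDpos : ∀ i ≤ r, 0 < 2 ^ (Dpart s q i r) * (x:ℤ) - Cpart s q r i := by
    intro i hi
    have h1 : (x:ℤ) ≤ 2 ^ (Dpart s q i r) * x := by
      have : (1:ℤ) ≤ 2 ^ (Dpart s q i r) := one_le_pow₀ (by norm_num)
      nlinarith [Int.natCast_nonneg x]
    have h2 : Cpart s q r i < (CB:ℤ) := hCbound i hi
    have h3 : (CB:ℤ) ≤ x := by exact_mod_cast hxge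
    linarith
  have hMval : ∀ i ≤ r,
      (3:ℤ) ^ (Spart s r i) * (m i : ℤ) = 2 ^ (Dpart s q i r) * x - Cpart s q r i := by
    intro i hi
    have hnn : 0 ≤ (2 ^ (Dpart s q i r) * (x:ℤ) - Cpart s q r i) / 3 ^ (Spart s r i) :=
      Int.ediv_nonneg (le_of_lt (hDpos i hi)) (by positivity)
    have hmi : ((m i : ℕ) : ℤ)
        = (2 ^ (Dpart s q i r) * (x:ℤ) - Cpart s q r i) / 3 ^ (Spart s r i) := by
      rw [hm]; exact Int.toNat_of_nonneg hnn
    rw [hmi]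
    exact Int.mul_ediv_cancel' (hdvd i hi)
  have hmpos : ∀ i ≤ r, 0 < m i := by
    intro i hi
    rcases Nat.eq_zero_or_pos (m i) with h | h
    · exfalso
      have h1 := hMval i hi
      rw [h] at h1
      have h2 := hDpos i hi
      push_cast at h1
      omega
    · exact h
  have hkeyZ : ∀ i < r, (3:ℤ) ^ (s i) * (m i : ℤ)
      = 2 ^ (q i + s (i+1)) * (m (i+1) : ℤ) - 2 ^ (q i) + 1 := by
    intro i hilt
    have h1 := hMval i (le_of_lt hilt)
    have h2 := hMval (i+1) hilt
    rw [Spart_rec s r i hilt, Dpart_rec s q i r hilt, Cpart_rec s q r i hilt,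
      pow_add, pow_add] at h1
    have h3 : ((3:ℤ) ^ (Spart s r (i+1))) ≠ 0 := by positivity
    apply mul_left_cancel₀ h3
    linear_combination h1 - (2:ℤ) ^ (q i + s (i+1)) * h2
  have hone : ∀ i ≤ r, 1 ≤ 2 ^ (s i) * m i ∧ 1 ≤ 3 ^ (s i) * m i := by
    intro i hi
    have h1 := hmpos i hi
    constructor
    · have : 1 ≤ 2 ^ (s i) := Nat.one_le_two_pow
      nlinarith
    · have : 1 ≤ 3 ^ (s i) := Nat.one_le_pow _ _ (by norm_num)
      nlinarith
  have hkeyN : ∀ i < r, 3 ^ (s i) * m i - 1 = 2 ^ (q i) * (2 ^ (s (i+1)) * m (i+1) - 1) := by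
    intro i hilt
    have p1 := (hone i (le_of_lt hilt)).2
    have p2 := (hone (i+1) hilt).1
    zify [p1, p2]
    have hz := hkeyZ i hilt
    rw [pow_add] at hz
    linarith
  have hmodd : ∀ i ≤ r, m i % 2 = 1 := by
    intro i hi
    rcases Nat.lt_or_ge i r with hilt | hige
    · have hk := hkeyN i hilt
      have p1 := (hone i (le_of_lt hilt)).2
      have p2 := (hone (i+1) hilt).1
      have heq : 3 ^ (s i) * m i = 2 ^ (q i) * (2 ^ (s (i+1)) * m (i+1) - 1) + 1 := by
        omega
      have hqi := hq i hilt
      have hev : 2 ^ (q i) * (2 ^ (s (i+1)) * m (i+1) - 1) % 2 = 0 := by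
        have : 2 ^ (q i) * (2 ^ (s (i+1)) * m (i+1) - 1)
            = 2 * (2 ^ (q i - 1) * (2 ^ (s (i+1)) * m (i+1) - 1)) := by
          rw [← mul_assoc]
          congr 1
          rw [← pow_succ']
          congr 1
          omega
        rw [this]
        exact Nat.mul_mod_right _ _
      have hmod : (3 ^ (s i) * m i) % 2 = 1 := by omega
      have h3odd : 3 ^ (s i) % 2 = 1 := by
        rw [Nat.pow_mod]; norm_num
      rw [Nat.mul_mod, h3odd] at hmod
      simpa using hmod
    · have hir : i = r := by omega
      have hmr : m r = x := by
        simp only [hm, Dpart, Spart, Cpart, Finset.Ico_self, Finset.sum_empty, pow_zero,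
          one_mul, sub_zero]
        simp
      rw [hir, hmr]
      exact hxodd
  -- the trajectory
  set n : ℕ := 2 ^ (s 0) * m 0 - 1 with hn
  have traj : ∀ i ≤ r,
      collatz^[∑ j ∈ Finset.range i, (2 * s j + q j)] n = 2 ^ (s i) * m i - 1 := by
    intro i
    induction i with
    | zero => intro _; simp [hn]
    | succ i ih =>
      intro hir
      have hilt : i < r := by omega
      have ihv := ih (le_of_lt hilt)
      rw [Finset.sum_range_succ]
      have e : (∑ j ∈ Finset.range i, (2 * s j + q j)) + (2 * s i + q i)
          = q i + (2 * s i + (∑ j ∈ Finset.range i, (2 * s j + q j))) := by omega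
      rw [e, Function.iterate_add_apply, Function.iterate_add_apply, ihv,
        collatz_pump _ _ (hmodd i (le_of_lt hilt)), hkeyN i hilt, collatz_pow2]
  refine ⟨n, m, ?_, ?_, ?_, rfl, ?_⟩
  · have h1 := (hone 0 (by omega)).1
    have h2 : 2 ≤ 2 ^ (s 0) := by
      have := hs 0 (by omega)
      calc 2 = 2 ^ 1 := by norm_num
        _ ≤ 2 ^ (s 0) := Nat.pow_le_pow_right (by norm_num) this
    have h3 := hmpos 0 (by omega)
    have h4 : 2 ≤ 2 ^ (s 0) * m 0 := by nlinarith
    omega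
  · have h2 : 2 ≤ 2 ^ (s 0) := by
      have := hs 0 (by omega)
      calc 2 = 2 ^ 1 := by norm_num
        _ ≤ 2 ^ (s 0) := Nat.pow_le_pow_right (by norm_num) this
    have hev : 2 ^ (s 0) * m 0 % 2 = 0 := by
      have : 2 ^ (s 0) * m 0 = 2 * (2 ^ (s 0 - 1) * m 0) := by
        rw [← mul_assoc]
        congr 1
        rw [← pow_succ']
        congr 1
        have := hs 0 (by omega)
        omega
      rw [this]
      exact Nat.mul_mod_right _ _
    have h3 := hmpos 0 (by omega)
    have h4 : 2 ≤ 2 ^ (s 0) * m 0 := by nlinarith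
    rw [hn]
    omega
  · intro i hi
    exact ⟨hmpos i hi, by have := hmodd i hi; omega⟩
  · intro i hilt
    refine ⟨traj i (le_of_lt hilt), ?_, hkeyN i hilt, traj (i+1) hilt⟩
    rw [add_comm, Function.iterate_add_apply, traj i (le_of_lt hilt),
      collatz_pump _ _ (hmodd i (le_of_lt hilt))]
end

section
/- Let r be a positive integer and let s_1, …, s_{r+1} and q_1, …, q_r be positive integers. Then there exist infinitely many positive odd integers m_1 for which there exist positive odd integers m_2, …, m_{r+1} with 3^{s_i} · m_i − 1 = 2^{q_i} · (2^{s_{i+1}} · m_{i+1} − 1) for all 1 ≤ i ≤ r; more precisely, there exists a positive odd integer M and there exists Q = Σ_{i=1}^{r} q_i + Σ_{i=2}^{r+1} s_i such that for every natural number t, the number m_1 = M + 2^{Q+1} · t is such an m_1. Consequently, infinitely many odd numbers implement any given finite Collatz evolution pattern. -/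
/-- `m1` implements the pattern given by `s 0, …, s r` and `q 0, …, q (r-1)`
(indexed from `0` instead of `1`): `m1` is a positive odd integer heading a chain
of positive odd integers `m 0 = m1, m 1, …, m r` with
`3 ^ s i * m i - 1 = 2 ^ q i * (2 ^ s (i+1) * m (i+1) - 1)` for all `i < r`. -/
def ImplementsPattern (r : ℕ) (s q : ℕ → ℕ) (m1 : ℕ) : Prop :=
  0 < m1 ∧ ¬ 2 ∣ m1 ∧
    ∃ m : ℕ → ℕ, m 0 = m1 ∧ (∀ i ≤ r, 0 < m i ∧ ¬ 2 ∣ m i) ∧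
      ∀ i < r, 3 ^ s i * m i - 1 = 2 ^ q i * (2 ^ s (i + 1) * m (i + 1) - 1)

private lemma key_pattern (r : ℕ) (s q : ℕ → ℕ)
    (hs : ∀ i ≤ r, 1 ≤ s i) (hq : ∀ i < r, 1 ≤ q i) :
    ∃ M : ℕ, 0 < M ∧ ¬ 2 ∣ M ∧
      ∀ t : ℕ,
        ImplementsPattern r s q
          (M + 2 ^ ((∑ i ∈ Finset.range r, q i) + (∑ i ∈ Finset.range r, s (i + 1)) + 1) * t) := by
  induction r generalizing s q with
  | zero =>
    refine ⟨1, one_pos, by decide, fun t => ?_⟩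
    have hE : (∑ i ∈ Finset.range 0, q i) + (∑ i ∈ Finset.range 0, s (i + 1)) + 1 = 1 := by
      simp
    rw [hE, pow_one]
    refine ⟨by omega, by omega, fun _ => 1 + 2 * t, rfl, ?_,
      fun i hi => absurd hi (Nat.not_lt_zero i)⟩
    intro i hi
    refine ⟨?_, ?_⟩
    · show 0 < 1 + 2 * t; omega
    · show ¬ 2 ∣ 1 + 2 * t; omega
  | succ r ih =>
    obtain ⟨M', hM'pos, hM'odd, hfam⟩ := ih (fun i => s (i + 1)) (fun i => q (i + 1))
      (fun i hi => hs (i + 1) (by omega)) (fun i hi => hq (i + 1) (by omega))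
    obtain ⟨Q', hQ'⟩ : ∃ Q', Q' = (∑ i ∈ Finset.range r, q (i + 1))
        + (∑ i ∈ Finset.range r, s (i + 1 + 1)) := ⟨_, rfl⟩
    have hfam' : ∀ t' : ℕ,
        ImplementsPattern r (fun i => s (i + 1)) (fun i => q (i + 1))
          (M' + 2 ^ (Q' + 1) * t') := by
      rw [hQ']; exact hfam
    obtain ⟨n, hn⟩ : ∃ n, n = 3 ^ s 0 := ⟨_, rfl⟩
    have hn3 : 3 ≤ n := by
      rw [hn]
      calc (3 : ℕ) = 3 ^ 1 := (pow_one 3).symm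
      _ ≤ 3 ^ s 0 := Nat.pow_le_pow_right (by norm_num) (hs 0 (by omega))
    haveI : NeZero n := ⟨by omega⟩
    have hq0 : 1 ≤ q 0 := hq 0 (by omega)
    obtain ⟨e, he⟩ : ∃ e, e = q 0 + s 1 + Q' + 1 := ⟨_, rfl⟩
    have hu : IsUnit ((2 : ZMod n) ^ e) := by
      refine IsUnit.pow _ ?_
      have h22 : ((2 : ℕ) : ZMod n) = (2 : ZMod n) := by push_cast; ring
      rw [← h22]
      refine (ZMod.isUnit_iff_coprime 2 n).mpr ?_
      rw [hn]
      exact Nat.Coprime.pow_right _ (by norm_num)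
    obtain ⟨t0, ht0⟩ : ∃ t0 : ℕ,
        t0 = (((2 : ZMod n) ^ e)⁻¹ * (2 ^ q 0 - 2 ^ (q 0 + s 1) * (M' : ZMod n) - 1)).val :=
      ⟨_, rfl⟩
    have h2e : (2 : ZMod n) ^ e * (t0 : ZMod n)
        = 2 ^ q 0 - 2 ^ (q 0 + s 1) * (M' : ZMod n) - 1 := by
      rw [ht0, ZMod.natCast_val, ZMod.cast_id, ← mul_assoc,
        ZMod.mul_inv_of_unit _ hu, one_mul]
    obtain ⟨m2, hm2⟩ : ∃ m2 : ℕ → ℕ, ∀ t, m2 t = M' + 2 ^ (Q' + 1) * (t0 + n * t) :=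
      ⟨_, fun _ => rfl⟩
    obtain ⟨A, hAdef⟩ : ∃ A : ℕ → ℕ, ∀ t, A t = 2 ^ q 0 * (2 ^ s 1 * m2 t - 1) + 1 :=
      ⟨_, fun _ => rfl⟩
    have hm2pos : ∀ t, 1 ≤ m2 t := fun t => by rw [hm2 t]; omega
    have hA' : ∀ t, A t + 2 ^ q 0 = 2 ^ (q 0 + s 1) * m2 t + 1 := by
      intro t
      have h1 : 1 ≤ 2 ^ s 1 * m2 t := by
        have := hm2pos t
        have : 0 < 2 ^ s 1 * m2 t := by positivity
        omega
      have h2 : 2 ^ q 0 * (2 ^ s 1 * m2 t - 1)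
          = 2 ^ q 0 * (2 ^ s 1 * m2 t) - 2 ^ q 0 * 1 := Nat.mul_sub ..
      have h3 : 2 ^ q 0 * (2 ^ s 1 * m2 t) = 2 ^ (q 0 + s 1) * m2 t := by
        rw [pow_add]; ring
      have h4 : 2 ^ q 0 ≤ 2 ^ q 0 * (2 ^ s 1 * m2 t) :=
        Nat.le_mul_of_pos_right _ (by positivity)
      rw [hAdef t]
      omega
    have hAlin : ∀ t, A t = A 0 + n * (2 ^ e * t) := by
      intro t
      have h0 := hA' 0
      have ht := hA' t
      have hm : m2 t = m2 0 + 2 ^ (Q' + 1) * (n * t) := by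
        rw [hm2 t, hm2 0]; ring
      have hkey : 2 ^ (q 0 + s 1) * m2 t
          = 2 ^ (q 0 + s 1) * m2 0 + n * (2 ^ e * t) := by
        rw [hm, he, pow_add, pow_add, pow_add]; ring
      omega
    have hm20 : m2 0 = M' + 2 ^ (Q' + 1) * t0 := by
      rw [hm2 0]; norm_num
    have hdvd0 : n ∣ A 0 := by
      have h0n : A 0 + 2 ^ q 0 = 2 ^ (q 0 + s 1) * (M' + 2 ^ (Q' + 1) * t0) + 1 := by
        have h := hA' 0
        rw [hm20] at h
        exact h
      have h0 : ((A 0 : ℕ) : ZMod n) + 2 ^ q 0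
          = 2 ^ (q 0 + s 1) * ((M' : ZMod n) + 2 ^ (Q' + 1) * (t0 : ZMod n)) + 1 := by
        exact_mod_cast congrArg (fun k : ℕ => (k : ZMod n)) h0n
      have h2e' : (2 : ZMod n) ^ (q 0 + s 1 + Q' + 1) * (t0 : ZMod n)
          = 2 ^ q 0 - 2 ^ (q 0 + s 1) * (M' : ZMod n) - 1 := by
        rw [← he]; exact h2e
      have hz : ((A 0 : ℕ) : ZMod n) = 0 := by
        linear_combination h0 + h2e'
      exact (ZMod.natCast_eq_zero_iff _ _).mp hz
    have hdvd : ∀ t, n ∣ A t := by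
      intro t
      rw [hAlin t]
      exact Dvd.dvd.add hdvd0 (dvd_mul_right n _)
    have hAodd : ∀ t, ¬ 2 ∣ A t := by
      intro t
      have h1 : (2 : ℕ) ∣ 2 ^ q 0 * (2 ^ s 1 * m2 t - 1) :=
        Dvd.dvd.mul_right (dvd_pow_self 2 (by omega)) _
      rw [hAdef t]
      omega
    have hApos : ∀ t, 0 < A t := fun t => by rw [hAdef t]; omega
    obtain ⟨M, hMdef⟩ : ∃ M, M = A 0 / n := ⟨_, rfl⟩
    have hMeq : n * M = A 0 := by
      rw [hMdef]; exact Nat.mul_div_cancel' hdvd0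
    have hMpos : 0 < M := by
      have := hApos 0
      rcases Nat.eq_zero_or_pos M with h | h
      · exfalso; rw [h, Nat.mul_zero] at hMeq; omega
      · exact h
    have hModd : ¬ 2 ∣ M := by
      intro h
      exact hAodd 0 (hMeq ▸ h.mul_left n)
    have hE : (∑ i ∈ Finset.range (r + 1), q i) + (∑ i ∈ Finset.range (r + 1), s (i + 1)) + 1
        = e := by
      rw [Finset.sum_range_succ' q, Finset.sum_range_succ' (fun i => s (i + 1)), he, hQ']
      ring
    refine ⟨M, hMpos, hModd, fun t => ?_⟩
    rw [hE]
    obtain ⟨-, -, m', hm'0, hm'cond, hm'eq⟩ := hfam' (t0 + n * t)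
    have hm'02 : m' 0 = m2 t := by rw [hm'0, hm2 t]
    have hm1 : n * (A t / n) = A t := Nat.mul_div_cancel' (hdvd t)
    have hm1' : A t / n = M + 2 ^ e * t := by
      rw [hAlin t, Nat.add_mul_div_left _ _ (by omega : 0 < n), hMdef]
    have hm1pos : 0 < A t / n := by
      have := hApos t
      rcases Nat.eq_zero_or_pos (A t / n) with h | h
      · exfalso; rw [h, Nat.mul_zero] at hm1; omega
      · exact h
    have hm1odd : ¬ 2 ∣ A t / n := by
      intro h
      exact hAodd t (hm1 ▸ h.mul_left n)
    have h2d : (2 : ℕ) ∣ 2 ^ e * t := Dvd.dvd.mul_right (dvd_pow_self 2 (by omega)) t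
    refine ⟨by omega, by omega,
      fun i => Nat.casesOn i (A t / n) (fun j => m' j), hm1', ?_, ?_⟩
    · intro i hi
      cases i with
      | zero => exact ⟨hm1pos, hm1odd⟩
      | succ j => exact hm'cond j (by omega)
    · intro i hi
      cases i with
      | zero =>
        show 3 ^ s 0 * (A t / n) - 1 = 2 ^ q 0 * (2 ^ s 1 * m' 0 - 1)
        rw [hm'02, ← hn]
        have hAt := hAdef t
        omega
      | succ j => exact hm'eq j (by omega)

/-- Infinitely many positive odd integers `m1` implement any given finite Collatz
evolution pattern; more precisely, there is a positive odd integer `M` such that,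
with `Q = ∑_{i < r} q i + ∑_{i < r} s (i+1)`, for every natural number `t` the
number `m1 = M + 2 ^ (Q + 1) * t` implements the pattern. -/
theorem infinitely_many_pattern_implementations (r : ℕ) (hr : 1 ≤ r) (s q : ℕ → ℕ)
    (hs : ∀ i ≤ r, 1 ≤ s i) (hq : ∀ i < r, 1 ≤ q i) :
    {m1 : ℕ | ImplementsPattern r s q m1}.Infinite ∧
    ∃ M : ℕ, 0 < M ∧ ¬ 2 ∣ M ∧
      ∀ t : ℕ,
        ImplementsPattern r s q
          (M + 2 ^ ((∑ i ∈ Finset.range r, q i) + (∑ i ∈ Finset.range r, s (i + 1)) + 1) * t) := by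
  obtain ⟨M, hMpos, hModd, hfam⟩ := key_pattern r s q hs hq
  refine ⟨?_, M, hMpos, hModd, hfam⟩
  apply Set.infinite_of_injective_forall_mem
    (f := fun t : ℕ =>
      M + 2 ^ ((∑ i ∈ Finset.range r, q i) + (∑ i ∈ Finset.range r, s (i + 1)) + 1) * t)
  · intro a b hab
    simp only at hab
    have h2 : 0 < 2 ^ ((∑ i ∈ Finset.range r, q i) + (∑ i ∈ Finset.range r, s (i + 1)) + 1) :=
      by positivity
    exact Nat.eq_of_mul_eq_mul_left h2 (Nat.add_left_cancel hab)
  · intro t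
    exact hfam t
end

section
/- Let s_1, q_1, s_2, q_2, s_3 be positive integers, suppose positive odd integers M_{10}, M̃_{20} satisfy 2^{q_1+s_2} · M̃_{20} − 3^{s_1} · M_{10} = 2^{q_1} − 1 and positive odd integers M_{20}, M̃_{30} satisfy 2^{q_2+s_3} · M̃_{30} − 3^{s_2} · M_{20} = 2^{q_2} − 1. Then there exist integers t_1 and t with 2^{q_2+s_3} · t − 3^{s_1} · t_1 = (M̃_{20} − M_{20})/2, where M̃_{20} − M_{20} is even so the right-hand side is an integer; consequently m_1 = M_{10} + 2^{q_1+s_2} · 2 t_1 and m_2 = M̃_{20} + 3^{s_1} · 2 t_1 = M_{20} + 2^{q_2+s_3} · 2 t and m_3 = M̃_{30} + 3^{s_2} · 2 t satisfy both chain equations 2^{q_1+s_2} · m_2 − 3^{s_1} · m_1 = 2^{q_1} − 1 and 2^{q_2+s_3} · m_3 − 3^{s_2} · m_2 = 2^{q_2} − 1. -/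
/-- Gluing two `sqs`-patterns: if the positive odd integers `M10, Mt20` solve
`2 ^ (q1 + s2) * Mt20 - 3 ^ s1 * M10 = 2 ^ q1 - 1` and the positive odd integers
`M20, Mt30` solve `2 ^ (q2 + s3) * Mt30 - 3 ^ s2 * M20 = 2 ^ q2 - 1`, then
`Mt20 - M20` is even and there exist integers `t1, t` with
`2 ^ (q2 + s3) * t - 3 ^ s1 * t1 = (Mt20 - M20) / 2`, so that
`m1 = M10 + 2 ^ (q1 + s2) * 2 t1`, `m2 = Mt20 + 3 ^ s1 * 2 t1 = M20 + 2 ^ (q2 + s3) * 2 t`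
and `m3 = Mt30 + 3 ^ s2 * 2 t` satisfy both chain equations. -/
theorem glue_two_sqs_patterns (s1 q1 s2 q2 s3 : ℕ)
    (hs1 : 1 ≤ s1) (hq1 : 1 ≤ q1) (hs2 : 1 ≤ s2) (hq2 : 1 ≤ q2) (hs3 : 1 ≤ s3)
    (M10 Mt20 M20 Mt30 : ℤ)
    (hM10 : 0 < M10) (hM10odd : ¬ 2 ∣ M10)
    (hMt20 : 0 < Mt20) (hMt20odd : ¬ 2 ∣ Mt20)
    (hM20 : 0 < M20) (hM20odd : ¬ 2 ∣ M20)
    (hMt30 : 0 < Mt30) (hMt30odd : ¬ 2 ∣ Mt30)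
    (heq1 : 2 ^ (q1 + s2) * Mt20 - 3 ^ s1 * M10 = 2 ^ q1 - 1)
    (heq2 : 2 ^ (q2 + s3) * Mt30 - 3 ^ s2 * M20 = 2 ^ q2 - 1) :
    2 ∣ (Mt20 - M20) ∧
    ∃ t1 t : ℤ,
      2 * (2 ^ (q2 + s3) * t - 3 ^ s1 * t1) = Mt20 - M20 ∧
      Mt20 + 3 ^ s1 * (2 * t1) = M20 + 2 ^ (q2 + s3) * (2 * t) ∧
      2 ^ (q1 + s2) * (Mt20 + 3 ^ s1 * (2 * t1))
        - 3 ^ s1 * (M10 + 2 ^ (q1 + s2) * (2 * t1)) = 2 ^ q1 - 1 ∧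
      2 ^ (q2 + s3) * (Mt30 + 3 ^ s2 * (2 * t))
        - 3 ^ s2 * (M20 + 2 ^ (q2 + s3) * (2 * t)) = 2 ^ q2 - 1 := by
  have hdvd : (2 : ℤ) ∣ (Mt20 - M20) := by
    rcases Int.even_or_odd Mt20 with h | h
    · exact absurd h.two_dvd hMt20odd
    rcases Int.even_or_odd M20 with h2 | h2
    · exact absurd h2.two_dvd hM20odd
    exact (h.sub_odd h2).two_dvd
  obtain ⟨d, hd⟩ := hdvd
  have hco : IsCoprime ((2:ℤ) ^ (q2 + s3)) ((3:ℤ) ^ s1) := by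
    apply IsCoprime.pow
    exact Int.isCoprime_iff_gcd_eq_one.mpr rfl
  obtain ⟨u, v, huv⟩ := hco
  refine ⟨⟨d, hd⟩, -v * d, u * d, ?_, ?_, ?_, ?_⟩
  · linear_combination 2 * d * huv - hd
  · linear_combination hd - 2 * d * huv
  · linear_combination heq1
  · linear_combination heq2
end
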